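/- For every safe and sound workflow net WN = (P, T, F) with at least one transition (equivalently, with ▶ ≠ ■), the language of runs of WN, as a subset of T*, is a star-free regular language. (Theorem 2: languages of safe and sound workflow nets are star-free.) -/

import Mathlib

open Classical

/-- The edge relation of the underlying bipartite graph of a Petri net:
places and transitions are nodes, flow pairs are directed edges. -/
def NetEdge {P T : Type} (Fpt : P → T → Prop) (Ftp : T → P → Prop) :
    (P ⊕ T) → (P ⊕ T) → Prop
  | Sum.inl p, Sum.inr t => Fpt p t
  | Sum.inr t, Sum.inl p => Ftp t p
  | _, _ => False

/-- A workflow net: a Petri net with flow relation split into its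
place-to-transition part `Fpt` and transition-to-place part `Ftp`,
a unique initial place `source` (empty preset), a unique output place `sink`
(empty postset), and every node on a directed path from `source` to `sink`. -/
structure WorkflowNet (P T : Type) where
  Fpt : P → T → Prop
  Ftp : T → P → Prop
  source : P
  sink : P
  source_pre_empty : ∀ t, ¬ Ftp t source
  sink_post_empty : ∀ t, ¬ Fpt sink t
  source_unique : ∀ p, (∀ t, ¬ Ftp t p) → p = source
  sink_unique : ∀ p, (∀ t, ¬ Fpt p t) → p = sink
  on_path : ∀ x : P ⊕ T,
    Relation.ReflTransGen (NetEdge Fpt Ftp) (Sum.inl source) x ∧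
    Relation.ReflTransGen (NetEdge Fpt Ftp) x (Sum.inl sink)

variable {P T : Type}

/-- The preset `•p` of a place: transitions `t` with `(t, p) ∈ F`. -/
def preset (N : WorkflowNet P T) (p : P) : Set T := {t | N.Ftp t p}

/-- The postset `p•` of a place: transitions `t` with `(p, t) ∈ F`. -/
def postset (N : WorkflowNet P T) (p : P) : Set T := {t | N.Fpt p t}

/-- The initial marking: one token on the initial place, none elsewhere. -/
noncomputable def initialMarking (N : WorkflowNet P T) : P → ℕ :=
  fun p => if p = N.source then 1 else 0

/-- The final marking: one token on the output place, none elsewhere. -/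
noncomputable def finalMarking (N : WorkflowNet P T) : P → ℕ :=
  fun p => if p = N.sink then 1 else 0

/-- A marking enables `t` iff every input place of `t` holds a token. -/
def Enables (N : WorkflowNet P T) (M : P → ℕ) (t : T) : Prop :=
  ∀ p, N.Fpt p t → 0 < M p

/-- `Fires N M t M'`: `t` is enabled at `M` and firing it yields `M'`. -/
def Fires (N : WorkflowNet P T) (M : P → ℕ) (t : T) (M' : P → ℕ) : Prop :=
  Enables N M t ∧ ∀ p,
    (N.Fpt p t ∧ ¬ N.Ftp t p → M' p = M p - 1) ∧
    (N.Ftp t p ∧ ¬ N.Fpt p t → M' p = M p + 1) ∧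
    (¬ (N.Fpt p t ∧ ¬ N.Ftp t p) → ¬ (N.Ftp t p ∧ ¬ N.Fpt p t) → M' p = M p)

/-- Successive firing of a finite sequence of transitions from a marking. -/
inductive FiresSeq (N : WorkflowNet P T) : (P → ℕ) → List T → (P → ℕ) → Prop
  | nil (M : P → ℕ) : FiresSeq N M [] M
  | cons {M M' M'' : P → ℕ} {t : T} {σ : List T} :
      Fires N M t M' → FiresSeq N M' σ M'' → FiresSeq N M (t :: σ) M''

/-- A firing sequence: fireable successively from the initial marking. -/
def FiringSequence (N : WorkflowNet P T) (σ : List T) : Prop :=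
  ∃ M, FiresSeq N (initialMarking N) σ M

/-- A reachable marking. -/
def Reachable (N : WorkflowNet P T) (M : P → ℕ) : Prop :=
  ∃ σ, FiresSeq N (initialMarking N) σ M

/-- A run: a firing sequence leading from the initial to the final marking. -/
def IsRun (N : WorkflowNet P T) (σ : List T) : Prop :=
  FiresSeq N (initialMarking N) σ (finalMarking N)

/-- Safety: every reachable marking puts at most one token in each place. -/
def Safe (N : WorkflowNet P T) : Prop :=
  ∀ M, Reachable N M → ∀ p, M p ≤ 1

/-- Soundness: option to complete, proper completion, no dead transitions. -/
def Sound (N : WorkflowNet P T) : Prop :=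
  (∀ M, Reachable N M → ∃ σ, FiresSeq N M σ (finalMarking N)) ∧
  (∀ M, Reachable N M → 0 < M N.sink → M = finalMarking N) ∧
  (∀ t : T, ∃ M, Reachable N M ∧ Enables N M t)

/-- `AtMostOne(A)`: at most one position of the trace carries a symbol of `A`. -/
def AtMostOneC {α : Type} (A : Set α) (σ : List α) : Prop :=
  ∀ i j : Fin σ.length, σ.get i ∈ A → σ.get j ∈ A → i = j

/-- `End(A)`: the trace is nonempty and its last symbol is in `A`. -/
def EndC {α : Type} (A : Set α) (σ : List α) : Prop :=
  ∃ a ∈ A, σ.getLast? = some a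

/-- `AlternatePrecedence(B, A)`: every `A`-position is preceded by a `B`-position
with no `A`-position strictly in between. -/
def AltPrecC {α : Type} (B A : Set α) (σ : List α) : Prop :=
  ∀ i : Fin σ.length, σ.get i ∈ A →
    ∃ j : Fin σ.length, j < i ∧ σ.get j ∈ B ∧
      ∀ k : Fin σ.length, j < k → k < i → σ.get k ∉ A

/-- The Declare constraint that Algorithm 1 generates from place `p`:
`AlternatePrecedence(•p, p•)` if both `•p` and `p•` are nonempty,
`AtMostOne(p•)` if `•p = ∅`, and `End(•p)` if `p• = ∅`. -/
def PlaceConstraint (N : WorkflowNet P T) (p : P) (σ : List T) : Prop :=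
  if preset N p = ∅ then AtMostOneC (postset N p) σ
  else if postset N p = ∅ then EndC (preset N p) σ
  else AltPrecC (preset N p) (postset N p) σ

/-- A model trace of the specification `DS(WN)`: it satisfies the
constraint generated from every place of the net. -/
def ModelTrace (N : WorkflowNet P T) (σ : List T) : Prop :=
  ∀ p : P, PlaceConstraint N p σ

/-- Star-free languages over `α`: generated from the empty language and the
singleton languages `{[a]}` by union, concatenation, and complementation
(relative to the set of all finite words). -/
inductive StarFree {α : Type} : Set (List α) → Prop
  | empty : StarFree (∅ : Set (List α))
  | single (a : α) : StarFree {[a]}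
  | union {L₁ L₂ : Set (List α)} : StarFree L₁ → StarFree L₂ → StarFree (L₁ ∪ L₂)
  | concat {L₁ L₂ : Set (List α)} : StarFree L₁ → StarFree L₂ →
      StarFree {w : List α | ∃ u ∈ L₁, ∃ v ∈ L₂, w = u ++ v}
  | compl {L : Set (List α)} : StarFree L → StarFree Lᶜ

/-!
Every place contributes one Declare constraint, and each constraint language is star-free: it is a
Boolean combination of languages `L₁ · a · L₂` with `a` ranging over a set of letters and `L₁`, `L₂`
star-free. It remains to show that for a safe and sound net the runs are exactly the traces
satisfying all the constraints.

Both directions rest on the marking equation `M p + #consumed = M₀ p + #produced`. Along a model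
trace, `AtMostOne` keeps the token of the source for its only consumer, and `AlternatePrecedence`
makes the producers of an inner place outnumber its consumers before each consumer, so every
transition is enabled; `End(•■)` then marks `■`, and soundness forces the final marking.
Conversely, along a run the first consumer empties the source for good; by safety every consumer
empties its inner place, so the next consumer needs a producer in between; and a run whose last
transition does not produce into `■` would already sit in the final marking, which enables nothing.
-/

namespace List

variable {α : Type*}

theorem forall_fin_iff_forall_eq_append_cons {σ : List α} {R : List α → α → List α → Prop} :
    (∀ i : Fin σ.length, R (σ.take i) (σ.get i) (σ.drop (i + 1))) ↔
      ∀ u a v, σ = u ++ a :: v → R u a v := by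
  constructor
  · rintro h u a v rfl
    simpa using h ⟨u.length, by simp⟩
  · intro h i
    apply h
    simp

theorem mem_drop_succ_iff {σ : List α} (i : Fin σ.length) {x : α} :
    x ∈ σ.drop (i + 1) ↔ ∃ j : Fin σ.length, i < j ∧ σ.get j = x := by
  rw [mem_drop_iff_getElem]
  constructor
  · rintro ⟨k, hk, rfl⟩
    exact ⟨⟨i + 1 + k, by omega⟩, by simp [Fin.lt_def]; omega, rfl⟩
  · rintro ⟨j, hij, rfl⟩
    refine ⟨j - (i + 1), by omega, ?_⟩
    simp only [get_eq_getElem]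
    congr 1
    rw [Fin.lt_def] at hij
    omega

end List

namespace StarFree

variable {α : Type}

theorem univ : StarFree (Set.univ : Set (List α)) := by
  simpa using (StarFree.empty (α := α)).compl

theorem iUnion {ι : Type*} [Finite ι] {L : ι → Set (List α)} (h : ∀ i, StarFree (L i)) :
    StarFree (⋃ i, L i) := by
  have := Fintype.ofFinite ι
  suffices ∀ s : Finset ι, StarFree (⋃ i ∈ s, L i) by simpa using this Finset.univ
  intro s
  induction s using Finset.induction_on with
  | empty => simpa using StarFree.empty
  | insert i s _ ih => simpa [Finset.set_biUnion_insert] using (h i).union ih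

theorem iInter {ι : Type*} [Finite ι] {L : ι → Set (List α)} (h : ∀ i, StarFree (L i)) :
    StarFree (⋂ i, L i) := by
  simpa [Set.compl_iUnion] using (iUnion fun i => (h i).compl).compl

end StarFree

section Languages

variable {α : Type} {A B : Set α}

def catLetter (L₁ : Set (List α)) (A : Set α) (L₂ : Set (List α)) : Set (List α) :=
  {w | ∃ u ∈ L₁, ∃ a ∈ A, ∃ v ∈ L₂, w = u ++ a :: v}

def avoiding (A : Set α) : Set (List α) := {w | ∀ x ∈ w, x ∉ A}

theorem StarFree.catLetter [Finite α] {L₁ L₂ : Set (List α)} (A : Set α)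
    (h₁ : StarFree L₁) (h₂ : StarFree L₂) : StarFree (catLetter L₁ A L₂) := by
  have hA : StarFree (⋃ a : A, {[(a : α)]}) := StarFree.iUnion fun a => StarFree.single _
  convert h₁.concat (hA.concat h₂) using 1
  ext w
  simp [_root_.catLetter, and_assoc]

theorem StarFree.avoiding [Finite α] (A : Set α) : StarFree (avoiding A) := by
  convert (StarFree.univ.catLetter A StarFree.univ).compl using 1
  ext w
  simp only [_root_.avoiding, _root_.catLetter, Set.mem_ofPred_eq, Set.mem_compl_iff,
    Set.mem_univ, true_and, not_exists, not_and]
  constructor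
  · rintro h u a ha v rfl
    exact h a (by simp) ha
  · intro h x hx hxA
    obtain ⟨u, v, rfl⟩ := List.append_of_mem hx
    exact h u x hxA v rfl

theorem StarFree.nil [Finite α] : StarFree ({[]} : Set (List α)) := by
  convert StarFree.avoiding (Set.univ : Set α) using 1
  ext w
  simp [_root_.avoiding, List.eq_nil_iff_forall_not_mem]

theorem mem_catLetter_avoiding_of_exists_mem {l : List α} (h : ∃ x ∈ l, x ∈ B) :
    l ∈ catLetter Set.univ B (avoiding B) := by
  induction l using List.reverseRecOn with
  | nil => simp at h
  | append_singleton l x ih =>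
    by_cases hx : x ∈ B
    · exact ⟨l, trivial, x, hx, [], by simp [avoiding], by simp⟩
    obtain ⟨u, -, b, hb, v, hv, rfl⟩ := ih (by
      obtain ⟨y, hy, hyB⟩ := h
      rcases List.mem_append.1 hy with hy | hy
      · exact ⟨y, hy, hyB⟩
      · exact (hx (List.mem_singleton.1 hy ▸ hyB)).elim)
    refine ⟨u, trivial, b, hb, v ++ [x], ?_, by simp⟩
    simp only [avoiding, Set.mem_ofPred_eq, List.mem_append, List.mem_singleton]
    rintro z (hz | rfl)
    exacts [hv z hz, hx]

theorem mem_or_of_append_singleton_mem_catLetter {u : List α} {x : α}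
    (h : u ++ [x] ∈ catLetter Set.univ B (avoiding A)) :
    x ∈ B ∨ (x ∉ A ∧ u ∈ catLetter Set.univ B (avoiding A)) := by
  obtain ⟨u₁, -, b, hb, v, hv, h⟩ := h
  rcases List.eq_nil_or_concat' v with rfl | ⟨v, y, rfl⟩
  · obtain ⟨-, hxb⟩ := List.append_inj' h rfl
    exact Or.inl (List.singleton_inj.1 hxb ▸ hb)
  · rw [← List.cons_append, ← List.append_assoc] at h
    obtain ⟨rfl, hxy⟩ := List.append_inj' h rfl
    obtain rfl : x = y := List.singleton_inj.1 hxy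
    exact Or.inr ⟨hv x (by simp), u₁, trivial, b, hb, v, fun z hz => hv z (by simp [hz]), rfl⟩

end Languages

section Constraints

variable {α : Type} {A B : Set α} {σ : List α}

theorem atMostOneC_iff : AtMostOneC A σ ↔ ∀ u a v, σ = u ++ a :: v → a ∈ A → v ∈ avoiding A := by
  rw [← List.forall_fin_iff_forall_eq_append_cons]
  simp only [avoiding, Set.mem_ofPred_eq, List.mem_drop_succ_iff]
  constructor
  · rintro h i hi _ ⟨j, hij, rfl⟩ hj
    exact hij.ne (h i j hi hj)
  · intro h i j hi hj
    rcases lt_trichotomy i j with hij | rfl | hji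
    · exact (h i hi _ ⟨j, hij, rfl⟩ hj).elim
    · rfl
    · exact (h j hj _ ⟨i, hji, rfl⟩ hi).elim

theorem endC_iff : EndC A σ ↔ ∃ u, ∃ a ∈ A, σ = u ++ [a] := by
  simp only [EndC, List.getLast?_eq_some_iff]
  exact ⟨fun ⟨a, ha, u, h⟩ => ⟨u, a, ha, h⟩, fun ⟨u, a, ha, h⟩ => ⟨a, ha, u, h⟩⟩

theorem take_mem_catLetter_iff (i : Fin σ.length) :
    σ.take i ∈ catLetter Set.univ B (avoiding A) ↔
      ∃ j < i, σ.get j ∈ B ∧ ∀ k, j < k → k < i → σ.get k ∉ A := by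
  simp only [catLetter, avoiding, Set.mem_univ, true_and, Set.mem_ofPred_eq, Fin.lt_def,
    List.get_eq_getElem]
  constructor
  · rintro ⟨u, b, hb, v, hv, h⟩
    have hlen : u.length + 1 + v.length = i := by
      have := congrArg List.length h
      simp only [List.length_take, List.length_append, List.length_cons] at this
      omega
    have hget : ∀ (k : ℕ) (hk : k < i), σ[k] = (u ++ b :: v)[k]'(by simp; omega) := by
      intro k hk
      simp_rw [← h, List.getElem_take]
    refine ⟨⟨u.length, by omega⟩, by simp; omega, by simpa [hget _ (by omega : u.length < i)], ?_⟩
    intro k hjk hki hkA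
    rw [hget k hki, List.getElem_append_right (by simp only at hjk; omega)] at hkA
    exact hv _ (List.getElem_mem _)
      (by simpa [List.getElem_cons, show k - u.length ≠ 0 by simp only at hjk; omega] using hkA)
  · rintro ⟨j, hji, hjB, hA⟩
    refine ⟨σ.take j, σ[j], hjB, (σ.take i).drop (j + 1), ?_, ?_⟩
    · intro x hx hxA
      obtain ⟨k, hk, rfl⟩ := List.mem_iff_getElem.mp hx
      simp only [List.length_drop, List.length_take] at hk
      exact hA ⟨j + 1 + k, by omega⟩ (by simp; omega) (by simp; omega) (by simpa using hxA)
    · conv_lhs => rw [← List.take_append_drop (j + 1) (σ.take i)]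
      rw [List.take_take, min_eq_left (by omega), List.take_succ_eq_append_getElem j.isLt,
        List.append_assoc, List.singleton_append, Fin.getElem_fin]

theorem altPrecC_iff :
    AltPrecC B A σ ↔
      ∀ u a v, σ = u ++ a :: v → a ∈ A → u ∈ catLetter Set.univ B (avoiding A) := by
  rw [← List.forall_fin_iff_forall_eq_append_cons]
  simp only [take_mem_catLetter_iff]
  rfl

theorem StarFree.atMostOneC [Finite α] (A : Set α) : StarFree {σ | AtMostOneC A σ} := by
  convert (StarFree.univ.catLetter A (StarFree.avoiding A).compl).compl using 1
  ext σ
  rw [Set.mem_ofPred_eq, atMostOneC_iff]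
  constructor
  · rintro h ⟨u, -, a, ha, v, hv, rfl⟩
    exact hv (h u a v rfl ha)
  · rintro h u a v rfl ha
    by_contra hv
    exact h ⟨u, trivial, a, ha, v, hv, rfl⟩

theorem StarFree.endC [Finite α] (A : Set α) : StarFree {σ | EndC A σ} := by
  convert StarFree.univ.catLetter A StarFree.nil using 1
  ext σ
  simp [endC_iff, _root_.catLetter]

theorem StarFree.altPrecC [Finite α] (B A : Set α) : StarFree {σ | AltPrecC B A σ} := by
  convert ((StarFree.univ.catLetter B (StarFree.avoiding A)).compl.catLetter A
    StarFree.univ).compl using 1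
  ext σ
  rw [Set.mem_ofPred_eq, altPrecC_iff]
  constructor
  · rintro h ⟨u, hu, a, ha, v, -, rfl⟩
    exact hu (h u a v rfl ha)
  · rintro h u a v rfl ha
    by_contra hu
    exact h ⟨u, hu, a, ha, v, trivial, rfl⟩

theorem AltPrecC.of_append {u v : List α} (h : AltPrecC B A (u ++ v)) : AltPrecC B A u := by
  rw [altPrecC_iff] at h ⊢
  rintro u₁ a u₂ rfl ha
  exact h u₁ a (u₂ ++ v) (by simp) ha

theorem AltPrecC.countP_le_and_lt {u : List α} (h : AltPrecC B A u) :
    u.countP (· ∈ A \ B) ≤ u.countP (· ∈ B \ A) ∧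
      (u ∈ catLetter Set.univ B (avoiding A) → u.countP (· ∈ A \ B) < u.countP (· ∈ B \ A)) := by
  induction u using List.reverseRecOn with
  | nil => exact ⟨le_rfl, fun ⟨u, _, a, _, v, _, h⟩ => by simp at h⟩
  | append_singleton u x ih =>
    obtain ⟨hle, hlt⟩ := ih h.of_append
    have hprec : x ∈ A → u ∈ catLetter Set.univ B (avoiding A) :=
      altPrecC_iff.1 h u x [] rfl
    have hsnoc : u ++ [x] ∈ catLetter Set.univ B (avoiding A) →
        x ∈ B ∨ (x ∉ A ∧ u ∈ catLetter Set.univ B (avoiding A)) :=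
      mem_or_of_append_singleton_mem_catLetter
    rw [List.countP_append, List.countP_append, List.countP_singleton, List.countP_singleton]
    by_cases hxA : x ∈ A <;> by_cases hxB : x ∈ B <;> simp [hxA, hxB] at hprec hsnoc <;>
      simp [hxA, hxB] at hle hlt ⊢
    · have := hlt hprec
      exact ⟨this.le, fun _ => this⟩
    · exact ⟨hlt hprec, fun h => (hsnoc h).elim⟩
    · exact ⟨by omega, fun _ => hle⟩
    · exact ⟨hle, fun h => hlt (hsnoc h)⟩

theorem AltPrecC.countP_lt {u v : List α} {a : α} (h : AltPrecC B A σ) (hσ : σ = u ++ a :: v)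
    (ha : a ∈ A) : u.countP (· ∈ A \ B) < u.countP (· ∈ B \ A) := by
  subst hσ
  exact h.of_append.countP_le_and_lt.2 (altPrecC_iff.1 h u a v rfl ha)

end Constraints

section Firing

variable {N : WorkflowNet P T} {M M' M'' : P → ℕ} {t : T} {σ : List T}

theorem Fires.marking_eq (h : Fires N M t M') (p : P) :
    M' p + (if t ∈ postset N p \ preset N p then 1 else 0) =
      M p + (if t ∈ preset N p \ postset N p then 1 else 0) := by
  obtain ⟨hen, hM'⟩ := h
  obtain ⟨hcons, hprod, hkeep⟩ := hM' p
  simp only [preset, postset, Set.mem_sdiff, Set.mem_ofPred_eq]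
  split_ifs with hc hp hp
  · exact absurd hc.1 hp.2
  · have := hen p hc.1
    rw [hcons hc]
    omega
  · rw [hprod hp]
  · rw [hkeep hc hp]

theorem FiresSeq.marking_eq (h : FiresSeq N M σ M') (p : P) :
    M' p + σ.countP (· ∈ postset N p \ preset N p) =
      M p + σ.countP (· ∈ preset N p \ postset N p) := by
  induction h with
  | nil => rfl
  | cons hf _ ih =>
    have := hf.marking_eq p
    simp only [List.countP_cons, decide_eq_true_eq]
    omega

theorem FiresSeq.append_cons_inv {u v : List T} (h : FiresSeq N M (u ++ t :: v) M'') :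
    ∃ M₁ M₂, FiresSeq N M u M₁ ∧ Fires N M₁ t M₂ ∧ FiresSeq N M₂ v M'' := by
  induction u generalizing M with
  | nil =>
    cases h with
    | cons hf hv => exact ⟨M, _, .nil M, hf, hv⟩
  | cons s u ih =>
    cases h with
    | cons hf hv =>
      obtain ⟨M₁, M₂, hu, ht, hv⟩ := ih hv
      exact ⟨M₁, M₂, .cons hf hu, ht, hv⟩

theorem Enables.exists_fires (h : Enables N M t) : ∃ M', Fires N M t M' := by
  refine ⟨fun p => if N.Fpt p t ∧ ¬ N.Ftp t p then M p - 1
    else if N.Ftp t p ∧ ¬ N.Fpt p t then M p + 1 else M p, h, fun p => ⟨?_, ?_, ?_⟩⟩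
  · intro hc
    simp only [if_pos hc]
  · intro hp
    simp only [if_neg (fun hc : N.Fpt p t ∧ ¬ N.Ftp t p => hp.2 hc.1), if_pos hp]
  · intro hc hp
    simp only [if_neg hc, if_neg hp]

theorem FiresSeq.exists_of_forall_enables (M : P → ℕ)
    (h : ∀ u t v M', σ = u ++ t :: v → FiresSeq N M u M' → Enables N M' t) :
    ∃ M', FiresSeq N M σ M' := by
  induction σ generalizing M with
  | nil => exact ⟨M, .nil M⟩
  | cons t σ ih =>
    obtain ⟨M₁, hf⟩ := (h [] t σ M rfl (.nil M)).exists_fires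
    obtain ⟨M', hσ⟩ := ih M₁ fun u s v M' hσ hu =>
      h (t :: u) s v M' (by simp [hσ]) (.cons hf hu)
    exact ⟨M', .cons hf hσ⟩

end Firing

section WorkflowNet

variable {N : WorkflowNet P T} {p : P} {σ : List T}

theorem preset_eq_empty_iff : preset N p = ∅ ↔ p = N.source := by
  refine ⟨fun h => N.source_unique p fun t ht => h.subset ht, ?_⟩
  rintro rfl
  exact Set.eq_empty_of_forall_notMem N.source_pre_empty

theorem postset_eq_empty_iff : postset N p = ∅ ↔ p = N.sink := by
  refine ⟨fun h => N.sink_unique p fun t ht => h.subset ht, ?_⟩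
  rintro rfl
  exact Set.eq_empty_of_forall_notMem N.sink_post_empty

theorem WorkflowNet.exists_input_place (N : WorkflowNet P T) (t : T) : ∃ p, N.Fpt p t := by
  rcases Relation.ReflTransGen.cases_tail (N.on_path (.inr t)).1 with h | ⟨x, -, hx⟩
  · cases h
  · rcases x with p | s
    exacts [⟨p, hx⟩, hx.elim]

theorem not_enables_finalMarking (t : T) : ¬ Enables N (finalMarking N) t := by
  intro h
  obtain ⟨p, hp⟩ := N.exists_input_place t
  have hsink : p = N.sink := by
    by_contra hps
    simpa [finalMarking, hps] using h p hp
  exact N.sink_post_empty t (hsink ▸ hp)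

theorem placeConstraint_source :
    PlaceConstraint N N.source σ ↔ AtMostOneC (postset N N.source) σ := by
  rw [PlaceConstraint, if_pos (preset_eq_empty_iff.2 rfl)]

theorem placeConstraint_sink (hne : N.source ≠ N.sink) :
    PlaceConstraint N N.sink σ ↔ EndC (preset N N.sink) σ := by
  rw [PlaceConstraint, if_neg (preset_eq_empty_iff.not.2 hne.symm),
    if_pos (postset_eq_empty_iff.2 rfl)]

theorem placeConstraint_of_ne (hs : p ≠ N.source) (ht : p ≠ N.sink) :
    PlaceConstraint N p σ ↔ AltPrecC (preset N p) (postset N p) σ := by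
  rw [PlaceConstraint, if_neg (preset_eq_empty_iff.not.2 hs),
    if_neg (postset_eq_empty_iff.not.2 ht)]

theorem StarFree.placeConstraint [Finite T] (N : WorkflowNet P T) (p : P) :
    StarFree {σ | PlaceConstraint N p σ} := by
  unfold PlaceConstraint
  split_ifs
  exacts [StarFree.atMostOneC _, StarFree.endC _, StarFree.altPrecC _ _]

end WorkflowNet

section Runs

variable {N : WorkflowNet P T} {σ : List T}

theorem atMostOneC_of_isRun (hrun : IsRun N σ) : AtMostOneC (postset N N.source) σ := by
  rw [atMostOneC_iff]
  rintro u a v rfl ha x hxv hx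
  obtain ⟨v₁, v₂, rfl⟩ := List.append_of_mem hxv
  obtain ⟨M, _, hu, hfx, -⟩ :=
    FiresSeq.append_cons_inv (u := u ++ a :: v₁) (by simpa [IsRun] using hrun)
  have heq := hu.marking_eq N.source
  have hcons : 0 < (u ++ a :: v₁).countP (· ∈ postset N N.source \ preset N N.source) :=
    List.countP_pos_iff.2 ⟨a, by simp, by simpa [preset, N.source_pre_empty] using ha⟩
  have hprod : (u ++ a :: v₁).countP (· ∈ preset N N.source \ postset N N.source) = 0 :=
    List.countP_eq_zero.2 fun y _ hy => by simp [preset, N.source_pre_empty] at hy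
  have := hfx.1 _ hx
  rw [hprod, initialMarking, if_pos rfl] at heq
  omega

theorem endC_of_isRun (hsound : Sound N) (hne : N.source ≠ N.sink) (hrun : IsRun N σ) :
    EndC (preset N N.sink) σ := by
  rw [endC_iff]
  rcases List.eq_nil_or_concat' σ with rfl | ⟨u, t, rfl⟩
  · simpa [initialMarking, finalMarking, hne] using FiresSeq.marking_eq hrun N.source
  obtain ⟨M, M', hu, ht, hfin⟩ := FiresSeq.append_cons_inv hrun
  cases hfin
  refine ⟨u, t, ?_, rfl⟩
  by_contra htp
  have hM : M N.sink = 1 := by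
    have heq := ht.marking_eq N.sink
    simp [finalMarking, htp, postset, N.sink_post_empty] at heq
    omega
  have hfin := hsound.2.1 M ⟨u, hu⟩ (by omega)
  exact not_enables_finalMarking t (hfin ▸ ht.1)

theorem altPrecC_of_isRun (hsafe : Safe N) (hrun : IsRun N σ) {p : P} (hp : p ≠ N.source) :
    AltPrecC (preset N p) (postset N p) σ := by
  rw [altPrecC_iff]
  rintro u a v rfl ha
  obtain ⟨M, _, hu, hfa, -⟩ := FiresSeq.append_cons_inv hrun
  have hprod : ∃ x ∈ u, x ∈ preset N p := by
    have heq := hu.marking_eq p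
    have := hfa.1 p ha
    rw [initialMarking, if_neg hp] at heq
    obtain ⟨x, hx, hxp⟩ := List.countP_pos_iff.1
      (show 0 < u.countP (· ∈ preset N p \ postset N p) by omega)
    exact ⟨x, hx, (of_decide_eq_true hxp).1⟩
  obtain ⟨u₁, -, b, hb, u₂, hu₂, rfl⟩ := mem_catLetter_avoiding_of_exists_mem hprod
  refine ⟨u₁, trivial, b, hb, u₂, ?_, rfl⟩
  -- By safety a consumer `x` after the last producer `b` empties `p` until `a` fires.
  intro x hx hxA
  obtain ⟨u₃, u₄, rfl⟩ := List.append_of_mem hx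
  obtain ⟨Mx, Mx', hux, hfx, hrest⟩ :=
    FiresSeq.append_cons_inv (u := u₁ ++ b :: u₃) (by simpa [IsRun] using hrun)
  obtain ⟨Ma, _, hua, hfa', -⟩ := FiresSeq.append_cons_inv hrest
  have hxB : x ∉ preset N p := hu₂ x hx
  have hprod₄ : u₄.countP (· ∈ preset N p \ postset N p) = 0 :=
    List.countP_eq_zero.2 fun y hy hy' => hu₂ y (by simp [hy]) (of_decide_eq_true hy').1
  have e₁ := hfx.marking_eq p
  have e₂ := hua.marking_eq p
  simp [hxA, hxB] at e₁
  have := hsafe Mx ⟨_, hux⟩ p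
  have := hfa'.1 p ha
  omega

theorem modelTrace_of_isRun (hsafe : Safe N) (hsound : Sound N) (hne : N.source ≠ N.sink)
    (hrun : IsRun N σ) : ModelTrace N σ := by
  intro p
  rcases eq_or_ne p N.source with rfl | hs
  · exact placeConstraint_source.2 (atMostOneC_of_isRun hrun)
  rcases eq_or_ne p N.sink with rfl | ht
  · exact (placeConstraint_sink hne).2 (endC_of_isRun hsound hne hrun)
  · exact (placeConstraint_of_ne hs ht).2 (altPrecC_of_isRun hsafe hrun hs)

theorem ModelTrace.enables {u v : List T} {t : T} {M : P → ℕ} (hmt : ModelTrace N σ)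
    (hσ : σ = u ++ t :: v) (hu : FiresSeq N (initialMarking N) u M) : Enables N M t := by
  intro p hpt
  have heq := hu.marking_eq p
  rcases eq_or_ne p N.source with rfl | hs
  · have hcon := placeConstraint_source.1 (hmt N.source)
    have hcons : u.countP (· ∈ postset N N.source \ preset N N.source) = 0 := by
      refine List.countP_eq_zero.2 fun x hx hxc => ?_
      obtain ⟨u₁, u₂, rfl⟩ := List.append_of_mem hx
      exact atMostOneC_iff.1 hcon u₁ x (u₂ ++ t :: v) (by simp [hσ]) (of_decide_eq_true hxc).1
        t (by simp) hpt
    have hprod : u.countP (· ∈ preset N N.source \ postset N N.source) = 0 :=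
      List.countP_eq_zero.2 fun y _ hy => by simp [preset, N.source_pre_empty] at hy
    rw [hcons, hprod, initialMarking, if_pos rfl] at heq
    omega
  · have ht : p ≠ N.sink := by
      rintro rfl
      exact N.sink_post_empty t hpt
    have := ((placeConstraint_of_ne hs ht).1 (hmt p)).countP_lt hσ hpt
    rw [initialMarking, if_neg hs] at heq
    omega

theorem isRun_of_modelTrace (hsound : Sound N) (hne : N.source ≠ N.sink)
    (hmt : ModelTrace N σ) : IsRun N σ := by
  obtain ⟨M, hM⟩ := FiresSeq.exists_of_forall_enables (initialMarking N)
    fun u t v M hσ hu => hmt.enables hσ hu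
  obtain ⟨u, a, ha, rfl⟩ := endC_iff.1 ((placeConstraint_sink hne).1 (hmt N.sink))
  have heq := hM.marking_eq N.sink
  have hprod : 0 < (u ++ [a]).countP (· ∈ preset N N.sink \ postset N N.sink) :=
    List.countP_pos_iff.2 ⟨a, by simp, by simpa [postset, N.sink_post_empty] using ha⟩
  have hcons : (u ++ [a]).countP (· ∈ postset N N.sink \ preset N N.sink) = 0 :=
    List.countP_eq_zero.2 fun y _ hy => by simp [postset, N.sink_post_empty] at hy
  rw [hcons, initialMarking, if_neg hne.symm] at heq
  have hfin : M = finalMarking N := hsound.2.1 M ⟨_, hM⟩ (by omega)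
  rwa [hfin] at hM

theorem isRun_iff_modelTrace (hsafe : Safe N) (hsound : Sound N) (hne : N.source ≠ N.sink) :
    IsRun N σ ↔ ModelTrace N σ :=
  ⟨modelTrace_of_isRun hsafe hsound hne, isRun_of_modelTrace hsound hne⟩

end Runs

/-- Theorem 2: the language of runs of a safe and sound workflow net
(with `▶ ≠ ■`) is a star-free regular language over its transitions. -/
theorem runs_starFree {P T : Type} [Finite P] [Finite T]
    (N : WorkflowNet P T) (hsafe : Safe N) (hsound : Sound N)
    (hne : N.source ≠ N.sink) :
    StarFree {σ : List T | IsRun N σ} := by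
  have hruns : {σ : List T | IsRun N σ} = ⋂ p, {σ | PlaceConstraint N p σ} := by
    ext σ
    simp only [Set.mem_iInter, Set.mem_ofPred_eq]
    exact isRun_iff_modelTrace hsafe hsound hne
  rw [hruns]
  exact StarFree.iInter (StarFree.placeConstraint N)
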